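/- For every exacting algorithm, every set V ⊆ 𝒮 of states, and every state X ∈ V: for each term t ∈ Γ(X) ∖ Γ(V), there is some term s ∈ Γ(V) such that s ≺_X t. -/

import Mathlib

open scoped Classical

/-- Ground terms over a vocabulary `F`: a function symbol applied to a list of terms. -/
inductive GTerm (F : Type) : Type where
  | app : F → List (GTerm F) → GTerm F

/-- The subterm relation on ground terms. -/
inductive Subterm {F : Type} : GTerm F → GTerm F → Prop where
  | refl (t : GTerm F) : Subterm t t
  | arg {s t : GTerm F} {f : F} {args : List (GTerm F)} :
      t ∈ args → Subterm s t → Subterm s (GTerm.app f args)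

/-- A state: a first-order structure over vocabulary `F`, with base set drawn
from a common universe `U`, interpreting every function symbol. -/
structure State (F U : Type) where
  base : Set U
  interp : F → List U → U
  closed : ∀ (f : F) (as : List U), (∀ a ∈ as, a ∈ base) → interp f as ∈ base

mutual
/-- Value of a ground term in a state. -/
def evalT {F U : Type} (X : State F U) : GTerm F → U
  | GTerm.app f args => X.interp f (evalList X args)

/-- Values of a list of ground terms in a state. -/
def evalList {F U : Type} (X : State F U) : List (GTerm F) → List U
  | [] => []
  | t :: ts => evalT X t :: evalList X ts
end

/-- The interpretation of the nullary symbol `trueS` in state `X`. -/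
def tval {F U : Type} (trueS : F) (X : State F U) : U := X.interp trueS []

/-- The interpretation of the nullary symbol `falseS` in state `X`. -/
def fval {F U : Type} (falseS : F) (X : State F U) : U := X.interp falseS []

/-- `X ⊨ C`: the term `C` evaluates in `X` to the interpretation of true. -/
def Holds {F U : Type} (trueS : F) (X : State F U) (C : GTerm F) : Prop :=
  evalT X C = tval trueS X

/-- A location–value pair `f(ā) ↦ b`. -/
abbrev Update (F U : Type) : Type := (F × List U) × U

/-- Two states agree on the values of all terms of `T`. -/
def AgreeOn {F U : Type} (T : Set (GTerm F)) (X Y : State F U) : Prop :=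
  ∀ t ∈ T, evalT X t = evalT Y t

/-- A term takes opposite truth values in `X` and `Y`. -/
def OppVals {F U : Type} (trueS falseS : F) (s : GTerm F) (X Y : State F U) : Prop :=
  (evalT X s = tval trueS X ∧ evalT Y s = fval falseS Y) ∨
  (evalT X s = fval falseS X ∧ evalT Y s = tval trueS Y)

/-- `lt` is a strict partial order whose field is contained in `T`. -/
def StrictOrderOn {F : Type} (T : Set (GTerm F)) (lt : GTerm F → GTerm F → Prop) : Prop :=
  (∀ s t, lt s t → s ∈ T ∧ t ∈ T) ∧ (∀ t, ¬ lt t t) ∧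
  (∀ r s t, lt r s → lt s t → lt r t)

/-- Abstract state machine programs over vocabulary `F`. -/
inductive Prog (F : Type) : Type where
  | assign : F → List (GTerm F) → GTerm F → Prog F
  | par : List (Prog F) → Prog F
  | cond : GTerm F → Prog F → Prog F

mutual
/-- The raw set of updates proposed by an ASM program in a state. -/
def updSet {F U : Type} (trueS : F) : Prog F → State F U → Set (Update F U)
  | Prog.assign f ss t, X => {((f, evalList X ss), evalT X t)}
  | Prog.par Ps, X => updSetList trueS Ps X
  | Prog.cond C P, X => {u | Holds trueS X C ∧ u ∈ updSet trueS P X}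

def updSetList {F U : Type} (trueS : F) : List (Prog F) → State F U → Set (Update F U)
  | [], _ => ∅
  | P :: Ps, X => updSet trueS P X ∪ updSetList trueS Ps X
end

/-- The program proposes two conflicting updates of the same location. -/
def Clash {F U : Type} (trueS : F) (P : Prog F) (X : State F U) : Prop :=
  ∃ l b b', (l, b) ∈ updSet trueS P X ∧ (l, b') ∈ updSet trueS P X ∧ b ≠ b'

/-- The proposed update set `Δ⁺_P(X)`; `none` is `⊥` (a clash). -/
noncomputable def DeltaPlus {F U : Type} (trueS : F) (P : Prog F) (X : State F U) :
    Option (Set (Update F U)) :=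
  if Clash trueS P X then none else some (updSet trueS P X)

/-- The update set `Δ_P(X)` of an ASM program: `⊥` when `Δ⁺` is `∅` or `⊥`,
and otherwise `Δ⁺` with all trivial updates removed. -/
noncomputable def DeltaASM {F U : Type} (trueS : F) (P : Prog F) (X : State F U) :
    Option (Set (Update F U)) :=
  if Clash trueS P X ∨ updSet trueS P X = ∅ then none
  else some {u ∈ updSet trueS P X | X.interp u.1.1 u.1.2 ≠ u.2}

mutual
/-- Raw explore terms of an ASM program in a state (before closing under
subterms and adding true and false). -/
def gamma0 {F U : Type} (trueS : F) : Prog F → State F U → Set (GTerm F)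
  | Prog.assign _ ss t, _ => {x | x ∈ ss} ∪ {t}
  | Prog.par Ps, X => gamma0List trueS Ps X
  | Prog.cond C P, X => {C} ∪ {x | Holds trueS X C ∧ x ∈ gamma0 trueS P X}

def gamma0List {F U : Type} (trueS : F) : List (Prog F) → State F U → Set (GTerm F)
  | [], _ => ∅
  | P :: Ps, X => gamma0 trueS P X ∪ gamma0List trueS Ps X
end

/-- The explore set `Γ_P(X)` of an ASM program: the raw explore terms
together with true and false, closed under subterms. -/
def GammaASM {F U : Type} (trueS falseS : F) (P : Prog F) (X : State F U) : Set (GTerm F) :=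
  {s | ∃ t, (t ∈ gamma0 trueS P X ∨ t = GTerm.app trueS [] ∨ t = GTerm.app falseS []) ∧
    Subterm s t}

/-- The graph of a state, as a set of location–value pairs over its base set. -/
def State.graph {F U : Type} (X : State F U) : Set (Update F U) :=
  {u | (∀ a ∈ u.1.2, a ∈ X.base) ∧ u.2 = X.interp u.1.1 u.1.2}

/-- `ζ` is an isomorphism of `F`-structures from `X` to `Y`. -/
def IsIso {F U : Type} (ζ : U → U) (X Y : State F U) : Prop :=
  Set.BijOn ζ X.base Y.base ∧
  ∀ (f : F) (as : List U), (∀ a ∈ as, a ∈ X.base) →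
    Y.interp f (as.map ζ) = ζ (X.interp f as)

/-- A nested conditional assignment: `if C₁ then if C₂ then ⋯ then A`,
where `A` is an assignment or the empty parallel statement. -/
inductive NestedCondAssign {F : Type} : Prog F → Prop where
  | assign (f : F) (ss : List (GTerm F)) (t : GTerm F) :
      NestedCondAssign (Prog.assign f ss t)
  | skip : NestedCondAssign (Prog.par [])
  | cond {P : Prog F} (C : GTerm F) :
      NestedCondAssign P → NestedCondAssign (Prog.cond C P)

/-- The shared explore terms `Γ(V) = ⋂_{X ∈ V} Γ(X)` of a set of states. -/
def sharedGamma {F U : Type} (Γ : State F U → Set (GTerm F)) (V : Set (State F U)) :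
    Set (GTerm F) :=
  ⋂ X ∈ V, Γ X

/-- `V` is agreeable: all states in `V` agree on the values of all shared explore terms. -/
def Agreeable {F U : Type} (Γ : State F U → Set (GTerm F)) (V : Set (State F U)) : Prop :=
  ∀ X ∈ V, ∀ Y ∈ V, AgreeOn (sharedGamma Γ V) X Y

/-- `V` is uniform: all states in `V` have the same explore set. -/
def Uniform {F U : Type} (Γ : State F U → Set (GTerm F)) (V : Set (State F U)) : Prop :=
  ∀ X ∈ V, ∀ Y ∈ V, Γ X = Γ Y

/-- The Discrimination property of the order `lt` at state `X`: `lt` is a partial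
order on `Γ(X)` and for every state `Y` and every `t ∈ Γ(X) ∖ Γ(Y)` there is an
`s ∈ Γ(X)` with `s ≺_X t` taking opposite truth values in `X` and `Y`. -/
def Discriminates {F U : Type} (trueS falseS : F) (S : Set (State F U))
    (Γ : State F U → Set (GTerm F)) (X : State F U)
    (lt : GTerm F → GTerm F → Prop) : Prop :=
  StrictOrderOn (Γ X) lt ∧
  ∀ Y ∈ S, ∀ t ∈ Γ X \ Γ Y, ∃ s ∈ Γ X, lt s t ∧ OppVals trueS falseS s X Y

/-- An infinite sequence `X₁, X₂, …` of states and `s₁, s₂, …` of terms such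
that for all `i`, `s₁ ≺_{Xᵢ} s₂ ≺_{Xᵢ} ⋯ ≺_{Xᵢ} sᵢ`, where `sᵢ` takes opposite
truth values in `Xᵢ` and `Xⱼ` for every `j > i`. -/
def BadChain {F U : Type} (trueS falseS : F) (S : Set (State F U))
    (lt : State F U → GTerm F → GTerm F → Prop) : Prop :=
  ∃ (Xs : ℕ → State F U) (ss : ℕ → GTerm F),
    (∀ i, Xs i ∈ S) ∧
    (∀ i j, j < i → lt (Xs i) (ss j) (ss (j + 1))) ∧
    (∀ i j, i < j → OppVals trueS falseS (ss i) (Xs i) (Xs j))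

/-!
A strict order on the finite set `Γ(X)` is well founded. By Discrimination, applied against a
state `Y ∈ V` with `t ∉ Γ(Y)`, every `t ∈ Γ(X) ∖ Γ(V)` has a `≺_X`-smaller term in `Γ(X)`.
Descending this way cannot stay in `Γ(X) ∖ Γ(V)` forever, so it reaches `Γ(V)`, and
transitivity puts that term below `t`.
-/

theorem StrictOrderOn.wellFounded {F : Type} {T : Set (GTerm F)}
    {lt : GTerm F → GTerm F → Prop} (hT : T.Finite) (h : StrictOrderOn T lt) :
    WellFounded lt := by
  obtain ⟨hfield, hirr, htrans⟩ := h
  have : IsStrictOrder (GTerm F) lt := { irrefl := hirr, trans := htrans }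
  exact Subrelation.wf (fun hst => ⟨hst, hfield _ _ hst⟩)
    (Set.wellFoundedOn_iff.1 hT.wellFoundedOn)

theorem WellFounded.exists_rel_mem_of_forall_exists_rel {α : Type*} {r : α → α → Prop}
    (hwf : WellFounded r) (htrans : ∀ a b c, r a b → r b c → r a c) {P A : Set α}
    (h : ∀ t ∈ P \ A, ∃ s ∈ P, r s t) : ∀ t ∈ P \ A, ∃ s ∈ A, r s t := by
  intro t
  induction t using hwf.induction with
  | _ t ih =>
    intro ht
    obtain ⟨s, hsP, hst⟩ := h t ht
    by_cases hsA : s ∈ A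
    · exact ⟨s, hsA, hst⟩
    · obtain ⟨q, hqA, hqs⟩ := ih s hst ⟨hsP, hsA⟩
      exact ⟨q, hqA, htrans _ _ _ hqs hst⟩

theorem exists_mem_notMem_of_notMem_sharedGamma {F U : Type}
    {Γ : State F U → Set (GTerm F)} {V : Set (State F U)} {t : GTerm F}
    (ht : t ∉ sharedGamma Γ V) : ∃ Y ∈ V, t ∉ Γ Y := by
  simpa [sharedGamma] using ht

/-- For every exacting algorithm, every set `V ⊆ 𝒮` of states, and every state
`X ∈ V`: for each term `t ∈ Γ(X) ∖ Γ(V)` there is some `s ∈ Γ(V)` with `s ≺_X t`. -/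
theorem shared_explore_term_below {F U : Type} [Finite F] (trueS falseS : F)
    (S : Set (State F U)) (Δ : State F U → Option (Set (Update F U)))
    (Γ : State F U → Set (GTerm F))
    -- true and false are interpreted as distinct elements in every state
    (htf : ∀ X ∈ S, tval trueS X ≠ fval falseS X)
    -- explore sets are finite sets of ground terms, closed under subterms
    (hfin : ∀ X ∈ S, (Γ X).Finite)
    (hsub : ∀ X ∈ S, ∀ t ∈ Γ X, ∀ s, Subterm s t → s ∈ Γ X)
    -- Determination
    (hdet : ∀ X ∈ S, ∀ Y ∈ S, AgreeOn (Γ X) X Y → Δ X = Δ Y)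
    -- Discrimination, with the given partial orders `lt X` (i.e. `≺_X`)
    (lt : State F U → GTerm F → GTerm F → Prop)
    (hdisc : ∀ X ∈ S, Discriminates trueS falseS S Γ X (lt X))
    -- Limitation
    (hlim : (⋃ X ∈ S, Γ X).Finite)
    (V : Set (State F U)) (hV : V ⊆ S) (X : State F U) (hX : X ∈ V)
    (t : GTerm F) (ht : t ∈ Γ X \ sharedGamma Γ V) :
    ∃ s ∈ sharedGamma Γ V, lt X s t := by
  obtain ⟨horder, hdiscX⟩ := hdisc X (hV hX)
  refine (horder.wellFounded (hfin X (hV hX))).exists_rel_mem_of_forall_exists_rel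
    horder.2.2 (fun r ⟨hrX, hrV⟩ => ?_) t ht
  obtain ⟨Y, hY, hrY⟩ := exists_mem_notMem_of_notMem_sharedGamma hrV
  obtain ⟨s, hsX, hsr, -⟩ := hdiscX Y (hV hY) r ⟨hrX, hrY⟩
  exact ⟨s, hsX, hsr⟩
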